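/- arXiv:2403.17200 — 3 statements merged into one kernel-verified Lean document; each statement's English description precedes it below -/
import Mathlib

section
/- Let R be a commutative ring and let N : ℕ × ℕ → R satisfy the WDVV recursion. Then for every integer n ≥ 1 one has N(1,n) = n² · N(n,1). (This is the abstract form of the paper's Lemma in Section 5.1, which for a smooth log Calabi–Yau pair (X,D) yields n⟨[pt]_n,[1]_1⟩ = (1/n)⟨[1]_n,[pt]_1⟩ for the two-point relative Gromov–Witten invariants.) -/
/-!
Sum the WDVV relation over all `(k, p)` with `k + p = n`. The terms `(k+1)·N(k+1,p)` and
`k·N(k,p+1)` telescope to `n·N(n,1) - N(1,n)`, the term `(k+p)·N(k+p,1)` contributes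
`(n-1)·n·N(n,1)`, and both quadratic sums become the sum of `x·y·N(x,1)·N(y,z)` over all
compositions `x + y + z = n` into positive parts, so they cancel.
-/

open Finset

/-- Both sides sum `f x y z` over the compositions `x + y + z = n` into positive parts: on the
left grouped by `x + y`, on the right by `y`. -/
theorem sum_Ico_sum_Ico_composition_reindex {M : Type*} [AddCommMonoid M]
    (f : ℕ → ℕ → ℕ → M) (n : ℕ) :
    ∑ k ∈ Ico 1 n, ∑ a ∈ Ico 1 k, f a (k - a) (n - k)
      = ∑ k ∈ Ico 1 n, ∑ r ∈ Ico 1 (n - k), f (n - k - r) k r := by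
  rw [sum_sigma', sum_sigma']
  refine sum_nbij' (fun x => ⟨x.1 - x.2, n - x.1⟩) (fun x => ⟨n - x.2, n - x.1 - x.2⟩)
    ?_ ?_ ?_ ?_ ?_ <;> intro x hx <;> simp only [mem_sigma, mem_Ico] at hx ⊢
  · omega
  · omega
  · ext <;> simp <;> omega
  · ext <;> simp <;> omega
  · rw [show n - (x.1 - x.2) - (n - x.1) = x.2 by omega]

/-- If `N : ℕ × ℕ → R` satisfies the WDVV recursion
`(k+1)·N(k+1,p) + (k+p)·N(k+p,1) + Σ_{a=1}^{k-1} a·(k−a)·N(a,1)·N(k−a,p)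
  = k·N(k,p+1) + Σ_{r=1}^{p-1} (p−r)·k·N(p−r,1)·N(k,r)`
for all `k, p ≥ 1`, then `N(1,n) = n² · N(n,1)` for every `n ≥ 1`. -/
theorem two_point_relative_GW_symmetry {R : Type*} [CommRing R] (N : ℕ × ℕ → R)
    (hWDVV : ∀ k p : ℕ, 1 ≤ k → 1 ≤ p →
      ((k : R) + 1) * N (k + 1, p) + ((k : R) + (p : R)) * N (k + p, 1)
        + ∑ a ∈ Finset.Ico 1 k, (a : R) * ((k - a : ℕ) : R) * N (a, 1) * N (k - a, p)
      = (k : R) * N (k, p + 1)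
        + ∑ r ∈ Finset.Ico 1 p, ((p - r : ℕ) : R) * (k : R) * N (p - r, 1) * N (k, r))
    (n : ℕ) (hn : 1 ≤ n) :
    N (1, n) = (n : R) ^ 2 * N (n, 1) := by
  set g : ℕ → R := fun j => j * N (j, n - j + 1)
  have hstep : ∀ k ∈ Ico 1 n, g (k + 1) - g k + n * N (n, 1) =
      ∑ r ∈ Ico 1 (n - k), ((n - k - r : ℕ) : R) * k * N (n - k - r, 1) * N (k, r)
        - ∑ a ∈ Ico 1 k, (a : R) * ((k - a : ℕ) : R) * N (a, 1) * N (k - a, n - k) := by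
    intro k hk
    obtain ⟨hk1, hkn⟩ := mem_Ico.mp hk
    have h := hWDVV k (n - k) hk1 (by omega)
    rw [show k + (n - k) = n by omega, ← Nat.cast_add, show k + (n - k) = n by omega] at h
    simp only [g, show n - (k + 1) + 1 = n - k by omega]
    push_cast
    linear_combination h
  have hsum := sum_congr rfl hstep
  rw [sum_add_distrib, sum_Ico_sub g hn, sum_sub_distrib, sum_const, Nat.card_Ico,
    sum_Ico_sum_Ico_composition_reindex (fun x y z => (x : R) * y * N (x, 1) * N (y, z)),
    sub_self, nsmul_eq_mul] at hsum
  simp only [g, Nat.sub_self, Nat.sub_add_cancel hn, zero_add, Nat.cast_one, one_mul] at hsum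
  rw [Nat.cast_sub hn] at hsum
  linear_combination -hsum
end

section
/- Let R be a commutative ring and let N : ℕ × ℕ → R satisfy the WDVV recursion. Then for every integer n ≥ 1: N(1,n) = n²·N(n,1) + Σ_{k=1}^{n-1} Σ_{a=1}^{k-1} a·(k−a)·N(a,1)·N(k−a, n−k) − Σ_{k=1}^{n-1} Σ_{r=1}^{n-k-1} (n−k−r)·k·N(n−k−r,1)·N(k,r). (This is the telescoped identity obtained in the proof of the Lemma in Section 5.1 by specializing the WDVV recursion to the pairs (k, p) = (k, n−k) for k = 1, …, n−1 and summing.) -/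
/-!
Specialize the WDVV recursion to `(k, n - k)`: writing `g j = j·N(j, n+1-j)`, it says that
`g (k+1) - g k` equals the quadratic terms minus `n·N(n,1)`. Summing over `1 ≤ k < n` telescopes
the left side to `g n - g 1 = n·N(n,1) - N(1,n)`, and the `n - 1` copies of `n·N(n,1)` combine
with the one from `g n` into `n²·N(n,1)`.
-/

open Finset

def SatisfiesWDVV {R : Type*} [CommRing R] (N : ℕ × ℕ → R) : Prop :=
  ∀ k p : ℕ, 1 ≤ k → 1 ≤ p →
    ((k : R) + 1) * N (k + 1, p) + ((k : R) + (p : R)) * N (k + p, 1)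
      + ∑ a ∈ Ico 1 k, (a : R) * ((k - a : ℕ) : R) * N (a, 1) * N (k - a, p)
    = (k : R) * N (k, p + 1)
      + ∑ r ∈ Ico 1 p, ((p - r : ℕ) : R) * (k : R) * N (p - r, 1) * N (k, r)

namespace SatisfiesWDVV

variable {R : Type*} [CommRing R] {N : ℕ × ℕ → R}

theorem antidiagonal_step (h : SatisfiesWDVV N) {n k : ℕ} (hk : 1 ≤ k) (hkn : k < n) :
    ((k + 1 : ℕ) : R) * N (k + 1, n + 1 - (k + 1)) - (k : R) * N (k, n + 1 - k)
      = ∑ r ∈ Ico 1 (n - k), ((n - k - r : ℕ) : R) * (k : R) * N (n - k - r, 1) * N (k, r)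
        - ∑ a ∈ Ico 1 k, (a : R) * ((k - a : ℕ) : R) * N (a, 1) * N (k - a, n - k)
        - (n : R) * N (n, 1) := by
  have hkp := h k (n - k) hk (by omega)
  rw [show k + (n - k) = n by omega, Nat.cast_sub hkn.le] at hkp
  rw [show n + 1 - (k + 1) = n - k by omega, show n + 1 - k = n - k + 1 by omega]
  push_cast
  linear_combination hkp

end SatisfiesWDVV

/-- If `N : ℕ × ℕ → R` satisfies the WDVV recursion, then for every `n ≥ 1`,
`N(1,n) = n²·N(n,1) + Σ_{k=1}^{n-1} Σ_{a=1}^{k-1} a·(k−a)·N(a,1)·N(k−a, n−k)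
  − Σ_{k=1}^{n-1} Σ_{r=1}^{n-k-1} (n−k−r)·k·N(n−k−r,1)·N(k,r)`. -/
theorem two_point_relative_GW_telescoped {R : Type*} [CommRing R] (N : ℕ × ℕ → R)
    (hWDVV : ∀ k p : ℕ, 1 ≤ k → 1 ≤ p →
      ((k : R) + 1) * N (k + 1, p) + ((k : R) + (p : R)) * N (k + p, 1)
        + ∑ a ∈ Finset.Ico 1 k, (a : R) * ((k - a : ℕ) : R) * N (a, 1) * N (k - a, p)
      = (k : R) * N (k, p + 1)
        + ∑ r ∈ Finset.Ico 1 p, ((p - r : ℕ) : R) * (k : R) * N (p - r, 1) * N (k, r))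
    (n : ℕ) (hn : 1 ≤ n) :
    N (1, n) = (n : R) ^ 2 * N (n, 1)
      + (∑ k ∈ Finset.Ico 1 n, ∑ a ∈ Finset.Ico 1 k,
          (a : R) * ((k - a : ℕ) : R) * N (a, 1) * N (k - a, n - k))
      - (∑ k ∈ Finset.Ico 1 n, ∑ r ∈ Finset.Ico 1 (n - k),
          ((n - k - r : ℕ) : R) * (k : R) * N (n - k - r, 1) * N (k, r)) := by
  have h : SatisfiesWDVV N := hWDVV
  have telescoped := sum_Ico_sub (fun j => (j : R) * N (j, n + 1 - j)) hn
  rw [sum_congr rfl fun k hk => h.antidiagonal_step (mem_Ico.1 hk).1 (mem_Ico.1 hk).2,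
    sum_sub_distrib, sum_sub_distrib, sum_const, Nat.card_Ico, nsmul_eq_mul, Nat.cast_sub hn,
    Nat.add_sub_cancel_left, Nat.add_sub_cancel] at telescoped
  push_cast at telescoped
  linear_combination telescoped
end

section
/- Let G be a finite tree and let c₁, c₂ be functions from the edge set of G to the natural numbers such that (i) for every edge e, c₁(e) = 0 or c₂(e) = 0, and (ii) for every vertex v, the sum of c₁(e) over all edges e incident to v equals the sum of c₂(e) over all edges e incident to v. Then c₁(e) = 0 and c₂(e) = 0 for every edge e. (This is the combinatorial core of Lemma 3.3/3.4 of the paper: in a genus zero degeneration graph every edge must have contact order zero with both orbifold divisors X×∞ and X×pt, respectively Y_∞ and Y_σ, because an edge cannot have nonzero contact with both divisors while each vertex has equal total contact order with the two divisors.) -/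
/-!
Call an edge *active* if one of its contact orders is nonzero. The active edges form a subforest
of `G`, so if there is one, the start of a longest active path is a vertex `x` with exactly one
active edge `s(x, y)`. Balancing at `x` then gives `c₁ s(x, y) = c₂ s(x, y)`, and since one of
the two vanishes, both do, contradicting that `s(x, y)` is active.
-/

open Finset

namespace SimpleGraph

variable {V : Type*} {G : SimpleGraph V}

theorem IsAcyclic.exists_existsUnique_adj [Finite G.edgeSet] (hG : G.IsAcyclic) {u v : V}
    (huv : G.Adj u v) : ∃ x, ∃! y, G.Adj x y := by
  have : Nonempty V := ⟨u⟩
  obtain ⟨a, b, p, hp, hmax⟩ := Walk.exists_isPath_forall_isPath_length_le_length G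
  have hnil : ¬p.Nil := by
    intro h
    have := hmax u v _ huv.isPath_toWalk
    simp [Walk.length_eq_zero_iff.mpr h] at this
  refine ⟨a, p.snd, p.adj_snd hnil, fun w haw => hG.eq_snd_of_adj_start hp haw ?_⟩
  by_contra hw
  have := hmax w b (.cons (G.adj_symm haw) p) (hp.cons hw)
  simp at this

theorem sum_filter_mem_edgeFinset_eq_of_adj {M : Type*} [AddCommMonoid M] [Fintype V]
    [DecidableEq V] [DecidableRel G.Adj] (c : Sym2 V → M) {x y : V} (hxy : G.Adj x y)
    (hc : ∀ z, G.Adj x z → z ≠ y → c s(x, z) = 0) :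
    ∑ e ∈ G.edgeFinset.filter (fun e => x ∈ e), c e = c s(x, y) := by
  refine sum_eq_single_of_mem _ (by simpa using hxy) fun e he hne => ?_
  obtain ⟨he, hx⟩ := mem_filter.mp he
  obtain ⟨z, rfl⟩ := Sym2.mem_iff_exists.mp hx
  exact hc z (mem_edgeFinset.mp he) (by rintro rfl; exact hne rfl)

end SimpleGraph

open SimpleGraph

/-- In a finite tree `G`, if `c₁, c₂` assign natural numbers to the edges such that
(i) for every edge `e`, `c₁ e = 0` or `c₂ e = 0`, and (ii) at every vertex the total of
`c₁` over incident edges equals the total of `c₂` over incident edges, then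
`c₁` and `c₂` vanish on every edge. -/
theorem tree_balanced_contact_orders_vanish {V : Type*} [Fintype V] [DecidableEq V]
    (G : SimpleGraph V) [DecidableRel G.Adj] (hG : G.IsTree)
    (c₁ c₂ : Sym2 V → ℕ)
    (h1 : ∀ e ∈ G.edgeSet, c₁ e = 0 ∨ c₂ e = 0)
    (h2 : ∀ v : V, ∑ e ∈ G.edgeFinset.filter (fun e => v ∈ e), c₁ e
                 = ∑ e ∈ G.edgeFinset.filter (fun e => v ∈ e), c₂ e) :
    ∀ e ∈ G.edgeSet, c₁ e = 0 ∧ c₂ e = 0 := by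
  refine fun e he => by_contra fun hactive => ?_
  set A := G.deleteEdges {e | c₁ e = 0 ∧ c₂ e = 0}
  have hA_adj : ∀ a b, A.Adj a b ↔ G.Adj a b ∧ ¬(c₁ s(a, b) = 0 ∧ c₂ s(a, b) = 0) :=
    fun a b => deleteEdges_adj ..
  have hA : A.IsAcyclic := hG.isAcyclic.anti (G.deleteEdges_le _)
  obtain ⟨u, v⟩ := e
  obtain ⟨x, y, hxy, hy⟩ := hA.exists_existsUnique_adj ((hA_adj u v).mpr ⟨he, hactive⟩)
  rw [hA_adj] at hxy
  have hinactive : ∀ z, G.Adj x z → z ≠ y → c₁ s(x, z) = 0 ∧ c₂ s(x, z) = 0 := fun z hxz hzy => by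
    by_contra h
    exact hzy (hy z ((hA_adj x z).mpr ⟨hxz, h⟩))
  have hbalanced : c₁ s(x, y) = c₂ s(x, y) := by
    rw [← sum_filter_mem_edgeFinset_eq_of_adj c₁ hxy.1 fun z hxz hzy => (hinactive z hxz hzy).1,
      ← sum_filter_mem_edgeFinset_eq_of_adj c₂ hxy.1 fun z hxz hzy => (hinactive z hxz hzy).2]
    exact h2 x
  apply hxy.2
  rcases h1 s(x, y) hxy.1 with h | h
  · exact ⟨h, hbalanced ▸ h⟩
  · exact ⟨hbalanced.trans h, h⟩
end
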